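/- Let 1/2 < H < 1 and let ρ be a real number with -1 < ρ < 2(H-1). Then the series ∑_{j ∈ ℤ²₀} |j|^{2ρ+2} · ( ∑_{h ∈ ℤ²₀, h ≠ j} |h|^{2ρ+2} / (|h|^{4H} |h-j|^{4H}) )² converges (is finite). -/

import Mathlib

/-!
Put `α = 2ρ + 2` and `β = 4H`, so that `0 < α` and `α - β < -2`. For `h ≠ 0, j` one of `|h|`,
`|h - j|` is at least `|j| / 2`; bounding that factor by its value at `|j| / 2` gives
`|h|^α / (|h|^β |h - j|^β) ≤ 2^β |j|^(α - β) (|h|^(α - β) + |h - j|^(-β))`,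
and both terms on the right are summable over `h`, since `∑ |k|^s < ∞` on `ℤ²` for `s < -2`
(compare `|k|` with the sup norm). Hence the inner sum is `O(|j|^(α - β))`, the `j`-th term of
the outer series is `O(|j|^(3α - 2β))`, and `3α - 2β < -2` because `ρ < 2(H - 1) < 4(H - 1)/3`.
-/

/-- Euclidean norm of an element of `ℤ²`. -/
noncomputable def znorm (k : ℤ × ℤ) : ℝ :=
  Real.sqrt ((k.1 : ℝ) ^ 2 + (k.2 : ℝ) ^ 2)

lemma znorm_nonneg (k : ℤ × ℤ) : 0 ≤ znorm k := Real.sqrt_nonneg _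

lemma znorm_rpow_nonneg (k : ℤ × ℤ) (s : ℝ) : 0 ≤ znorm k ^ s :=
  Real.rpow_nonneg (znorm_nonneg k) s

lemma znorm_eq_norm_complex (k : ℤ × ℤ) : znorm k = ‖(k.1 + k.2 * Complex.I : ℂ)‖ := by
  rw [znorm, ← Complex.norm_add_mul_I]
  norm_cast

lemma znorm_le_add (h j : ℤ × ℤ) : znorm j ≤ znorm h + znorm (h - j) := by
  have hsub : (j.1 + j.2 * Complex.I : ℂ) =
      (h.1 + h.2 * Complex.I) - ((h - j).1 + (h - j).2 * Complex.I) := by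
    push_cast [Prod.fst_sub, Prod.snd_sub]
    ring
  rw [znorm_eq_norm_complex, znorm_eq_norm_complex, znorm_eq_norm_complex, hsub]
  exact norm_sub_le _ _

lemma norm_le_znorm (k : ℤ × ℤ) : ‖k‖ ≤ znorm k := by
  rw [Prod.norm_def, Int.norm_eq_abs, Int.norm_eq_abs, znorm]
  exact max_le (Real.abs_le_sqrt (by nlinarith)) (Real.abs_le_sqrt (by nlinarith))

lemma one_le_norm_int_prod {k : ℤ × ℤ} (hk : k ≠ 0) : 1 ≤ ‖k‖ := by
  rw [Prod.norm_def, Int.norm_eq_abs, Int.norm_eq_abs]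
  by_cases h₁ : k.1 = 0
  · have h₂ : k.2 ≠ 0 := fun h₂ => hk (Prod.ext h₁ h₂)
    exact le_max_of_le_right (by exact_mod_cast Int.one_le_abs h₂)
  · exact le_max_of_le_left (by exact_mod_cast Int.one_le_abs h₁)

lemma one_le_znorm {k : ℤ × ℤ} (hk : k ≠ 0) : 1 ≤ znorm k :=
  (one_le_norm_int_prod hk).trans (norm_le_znorm k)

lemma znorm_pos {k : ℤ × ℤ} (hk : k ≠ 0) : 0 < znorm k :=
  zero_lt_one.trans_le (one_le_znorm hk)

lemma summable_norm_rpow_int_prod {s : ℝ} (hs : s < -2) : Summable fun k : ℤ × ℤ => ‖k‖ ^ s := by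
  have hnorm (k : ℤ × ℤ) : ‖(finTwoArrowEquiv ℤ).symm k‖ = ‖k‖ := by
    simp [Pi.norm_def, Prod.norm_def, Fin.univ_succ]
  simpa only [Function.comp_def, hnorm, neg_neg] using
    (EisensteinSeries.summable_one_div_norm_rpow (k := -s) (by linarith)).comp_injective
      (finTwoArrowEquiv ℤ).symm.injective

lemma summable_znorm_rpow {s : ℝ} (hs : s < -2) : Summable fun k : ℤ × ℤ => znorm k ^ s := by
  refine (summable_norm_rpow_int_prod hs).of_nonneg_of_le
    (fun k => znorm_rpow_nonneg k s) fun k => ?_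
  rcases eq_or_ne k 0 with rfl | hk
  · simp [znorm]
  · exact Real.rpow_le_rpow_of_nonpos (zero_lt_one.trans_le (one_le_norm_int_prod hk))
      (norm_le_znorm k) (by linarith)

lemma rpow_le_two_rpow_mul_rpow_of_half_le {x d γ : ℝ} (hd : 0 < d) (hx : d / 2 ≤ x)
    (hγ : γ ≤ 0) : x ^ γ ≤ 2 ^ (-γ) * d ^ γ := by
  calc x ^ γ ≤ (d / 2) ^ γ := Real.rpow_le_rpow_of_nonpos (by positivity) hx hγ
    _ = 2 ^ (-γ) * d ^ γ := by
      rw [Real.div_rpow hd.le zero_le_two, Real.rpow_neg zero_le_two]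
      ring

lemma rpow_div_rpow_mul_rpow_le {a c d α β : ℝ} (ha : 0 < a) (hc : 0 < c) (hd : 1 ≤ d)
    (hdac : d ≤ a + c) (hα : 0 ≤ α) (hαβ : α ≤ β) :
    a ^ α / (a ^ β * c ^ β) ≤ 2 ^ β * d ^ (α - β) * (a ^ (α - β) + c ^ (-β)) := by
  have hd₀ : 0 < d := by linarith
  have ha' := Real.rpow_nonneg ha.le (α - β)
  have hc' := Real.rpow_nonneg hc.le (-β)
  rw [show a ^ α / (a ^ β * c ^ β) = a ^ (α - β) * c ^ (-β) by
    rw [Real.rpow_sub ha, Real.rpow_neg hc.le]; ring]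
  rcases le_total (d / 2) a with had | hda
  · have hbound : a ^ (α - β) ≤ 2 ^ β * d ^ (α - β) :=
      calc a ^ (α - β) ≤ 2 ^ (-(α - β)) * d ^ (α - β) :=
            rpow_le_two_rpow_mul_rpow_of_half_le hd₀ had (by linarith)
        _ ≤ 2 ^ β * d ^ (α - β) := by gcongr <;> linarith
    calc a ^ (α - β) * c ^ (-β) ≤ 2 ^ β * d ^ (α - β) * c ^ (-β) := by gcongr
      _ ≤ 2 ^ β * d ^ (α - β) * (a ^ (α - β) + c ^ (-β)) := by
        gcongr
        exact le_add_of_nonneg_left ha'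
  · have hbound : c ^ (-β) ≤ 2 ^ β * d ^ (α - β) :=
      calc c ^ (-β) ≤ 2 ^ (-(-β)) * d ^ (-β) :=
            rpow_le_two_rpow_mul_rpow_of_half_le hd₀ (by linarith) (by linarith)
        _ ≤ 2 ^ β * d ^ (α - β) := by
          rw [neg_neg]
          gcongr
          linarith
    calc a ^ (α - β) * c ^ (-β) ≤ 2 ^ β * d ^ (α - β) * a ^ (α - β) := by
          rw [mul_comm _ (a ^ (α - β))]
          gcongr
      _ ≤ 2 ^ β * d ^ (α - β) * (a ^ (α - β) + c ^ (-β)) := by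
        gcongr
        exact le_add_of_nonneg_right hc'

lemma tsum_rpow_div_rpow_mul_rpow_le {α β : ℝ} (hα : 0 ≤ α) (hαβ : α - β < -2) {j : ℤ × ℤ}
    (hj : j ≠ 0) :
    ∑' h : {h : ℤ × ℤ // h ≠ 0 ∧ h ≠ j},
        znorm h.1 ^ α / (znorm h.1 ^ β * znorm (h.1 - j) ^ β) ≤
      2 ^ β * (∑' k, znorm k ^ (α - β) + ∑' k, znorm k ^ (-β)) * znorm j ^ (α - β) := by
  have hval : Function.Injective fun h : {h : ℤ × ℤ // h ≠ 0 ∧ h ≠ j} => h.1 :=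
    Subtype.val_injective
  have hshift : Function.Injective fun h : {h : ℤ × ℤ // h ≠ 0 ∧ h ≠ j} => h.1 - j :=
    sub_left_injective.comp Subtype.val_injective
  have hs₁ := summable_znorm_rpow hαβ
  have hs₂ := summable_znorm_rpow (show -β < -2 by linarith)
  have hf₁ : Summable fun h : {h : ℤ × ℤ // h ≠ 0 ∧ h ≠ j} => znorm h.1 ^ (α - β) :=
    hs₁.comp_injective hval
  have hf₂ : Summable fun h : {h : ℤ × ℤ // h ≠ 0 ∧ h ≠ j} => znorm (h.1 - j) ^ (-β) :=
    hs₂.comp_injective hshift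
  have hterm (h : {h : ℤ × ℤ // h ≠ 0 ∧ h ≠ j}) :
      znorm h.1 ^ α / (znorm h.1 ^ β * znorm (h.1 - j) ^ β) ≤
        2 ^ β * znorm j ^ (α - β) * (znorm h.1 ^ (α - β) + znorm (h.1 - j) ^ (-β)) :=
    rpow_div_rpow_mul_rpow_le (znorm_pos h.2.1) (znorm_pos (sub_ne_zero.2 h.2.2))
      (one_le_znorm hj) (znorm_le_add h.1 j) hα (by linarith)
  have hmajorant := (hf₁.add hf₂).mul_left (2 ^ β * znorm j ^ (α - β))
  have hterm_nonneg (h : {h : ℤ × ℤ // h ≠ 0 ∧ h ≠ j}) :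
      0 ≤ znorm h.1 ^ α / (znorm h.1 ^ β * znorm (h.1 - j) ^ β) :=
    div_nonneg (znorm_rpow_nonneg _ _) (mul_nonneg (znorm_rpow_nonneg _ _) (znorm_rpow_nonneg _ _))
  calc _ ≤ ∑' h : {h : ℤ × ℤ // h ≠ 0 ∧ h ≠ j},
          2 ^ β * znorm j ^ (α - β) * (znorm h.1 ^ (α - β) + znorm (h.1 - j) ^ (-β)) :=
        Summable.tsum_le_tsum hterm (hmajorant.of_nonneg_of_le hterm_nonneg hterm) hmajorant
    _ = 2 ^ β * znorm j ^ (α - β) * (∑' h : {h : ℤ × ℤ // h ≠ 0 ∧ h ≠ j}, znorm h.1 ^ (α - β) +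
          ∑' h : {h : ℤ × ℤ // h ≠ 0 ∧ h ≠ j}, znorm (h.1 - j) ^ (-β)) := by
        rw [tsum_mul_left, hf₁.tsum_add hf₂]
    _ ≤ 2 ^ β * znorm j ^ (α - β) * (∑' k, znorm k ^ (α - β) + ∑' k, znorm k ^ (-β)) := by
        have := znorm_nonneg j
        gcongr
        · exact hf₁.tsum_le_tsum_of_inj _ hval (fun k _ => znorm_rpow_nonneg k _)
            (fun _ => le_rfl) hs₁
        · exact hf₂.tsum_le_tsum_of_inj _ hshift (fun k _ => znorm_rpow_nonneg k _)
            (fun _ => le_rfl) hs₂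
    _ = _ := by ring

lemma summable_rpow_mul_tsum_rpow_div_rpow_mul_rpow_sq {α β : ℝ} (hα : 0 ≤ α)
    (hαβ : α - β < -2) (hdecay : 3 * α - 2 * β < -2) :
    Summable (fun j : {j : ℤ × ℤ // j ≠ 0} =>
      znorm j.1 ^ α *
        (∑' h : {h : ℤ × ℤ // h ≠ 0 ∧ h ≠ j.1},
            znorm h.1 ^ α / (znorm h.1 ^ β * znorm (h.1 - j.1) ^ β)) ^ 2) := by
  set C := 2 ^ β * (∑' k, znorm k ^ (α - β) + ∑' k, znorm k ^ (-β))
  have hmajorant : Summable fun j : {j : ℤ × ℤ // j ≠ 0} => C ^ 2 * znorm j.1 ^ (3 * α - 2 * β) :=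
    ((summable_znorm_rpow hdecay).comp_injective Subtype.val_injective).mul_left _
  refine hmajorant.of_nonneg_of_le (fun j => ?_) fun j => ?_
  · exact mul_nonneg (znorm_rpow_nonneg _ _) (sq_nonneg _)
  · have hj := znorm_pos j.2
    calc _ ≤ znorm j.1 ^ α * (C * znorm j.1 ^ (α - β)) ^ 2 := by
          gcongr
          · exact tsum_nonneg fun h => div_nonneg (znorm_rpow_nonneg _ _)
              (mul_nonneg (znorm_rpow_nonneg _ _) (znorm_rpow_nonneg _ _))
          · exact tsum_rpow_div_rpow_mul_rpow_le hα hαβ j.2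
      _ = C ^ 2 * znorm j.1 ^ (3 * α - 2 * β) := by
        rw [show 3 * α - 2 * β = α + (α - β) + (α - β) by ring, Real.rpow_add hj,
          Real.rpow_add hj]
        ring

theorem statement_13_general (H ρ : ℝ) (hH2 : H < 1)
    (hρ1 : -1 < ρ) (hρ2 : ρ < 2 * (H - 1)) :
    Summable (fun j : {j : ℤ × ℤ // j ≠ 0} =>
      znorm j.1 ^ (2 * ρ + 2) *
        (∑' h : {h : ℤ × ℤ // h ≠ 0 ∧ h ≠ j.1},
            znorm h.1 ^ (2 * ρ + 2) /
              (znorm h.1 ^ (4 * H) * znorm (h.1 - j.1) ^ (4 * H))) ^ 2) :=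
  summable_rpow_mul_tsum_rpow_div_rpow_mul_rpow_sq (by linarith) (by linarith) (by linarith)

theorem statement_13 (H ρ : ℝ) (hH1 : 1 / 2 < H) (hH2 : H < 1)
    (hρ1 : -1 < ρ) (hρ2 : ρ < 2 * (H - 1)) :
    Summable (fun j : {j : ℤ × ℤ // j ≠ 0} =>
      znorm j.1 ^ (2 * ρ + 2) *
        (∑' h : {h : ℤ × ℤ // h ≠ 0 ∧ h ≠ j.1},
            znorm h.1 ^ (2 * ρ + 2) /
              (znorm h.1 ^ (4 * H) * znorm (h.1 - j.1) ^ (4 * H))) ^ 2) :=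
  statement_13_general H ρ hH2 hρ1 hρ2
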